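/- arXiv:1905.07509 — 2 statements merged into one kernel-verified Lean document; each statement's English description precedes it below -/
import Mathlib

section
/- For every finite even n ≥ 2 and all x₀, x ∈ [a,b], the Φ-generalized powers satisfy the binomial identity ∑_{k=0}^n (−1)^k C(n,k) X^(k)(x₀,x) X̃^(n−k)(x₀,x) = 0. -/
/-! Write `X̃⁽ᵐ⁾` as `X⁽ᵐ⁾` for `Φ⁻¹` and put `S(y) = ∑ₖ (-1)ᵏ C(n,k) X⁽ᵏ⁾(x₀,y) X̃⁽ⁿ⁻ᵏ⁾(x₀,y)`.
Differentiating `X⁽ᵏ⁺¹⁾` produces the weight `Φ^((-1)^(k+1))`, differentiating `X̃⁽ⁿ⁻ᵏ⁾` the weight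
`Φ^(-(-1)^(n-k))`; for even `n` these agree, and with `C(n,k+1)(k+1) = C(n,k)(n-k)` the
derivative of `S` telescopes to `0`. So `S` is constant, and `S(x₀) = 0` because every term
contains a factor `X⁽ᵐ⁾(x₀,x₀)` or `X̃⁽ᵐ⁾(x₀,x₀)` with `m > 0`. To work on all of `ℝ`, `Φ` is
replaced by its constant extension off `[a,b]`, which does not change the powers on `[a,b]`. -/

noncomputable def genX (Φ : ℝ → ℂ) : ℕ → ℝ → ℝ → ℂ
  | 0 => fun _ _ => 1
  | n + 1 => fun x₀ x =>
      (n + 1 : ℕ) * ∫ ξ in x₀..x, genX Φ n x₀ ξ * Φ ξ ^ ((-1 : ℤ) ^ (n + 1))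

noncomputable def genXt (Φ : ℝ → ℂ) : ℕ → ℝ → ℝ → ℂ
  | 0 => fun _ _ => 1
  | n + 1 => fun x₀ x =>
      (n + 1 : ℕ) * ∫ ξ in x₀..x, genXt Φ n x₀ ξ * Φ ξ ^ (-((-1 : ℤ) ^ (n + 1)))

open Set Finset intervalIntegral

theorem sum_alternating_choose_mul_leibniz_eq_zero {R : Type*} [CommRing R] (n : ℕ)
    (f g p q : ℕ → R) (hpq : ∀ k < n, p (k + 1) = q (n - k)) :
    ∑ k ∈ range (n + 1), (-1) ^ k * (n.choose k : R) *
      ((k : R) * f (k - 1) * p k * g (n - k) +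
        f k * (((n - k : ℕ) : R) * g (n - k - 1) * q (n - k))) = 0 := by
  simp_rw [mul_add]
  rw [sum_add_distrib, sum_range_succ', sum_range_succ]
  simp only [Nat.cast_zero, zero_mul, mul_zero, add_zero, Nat.sub_self, ← sum_add_distrib]
  refine sum_eq_zero fun k hk => ?_
  have hchoose := congrArg (Nat.cast : ℕ → R) (Nat.choose_succ_right_eq n k)
  push_cast at hchoose
  rw [hpq k (mem_range.1 hk), Nat.add_sub_cancel, Nat.sub_sub]
  push_cast
  linear_combination (-(-1) ^ k * f k * g (n - (k + 1)) * q (n - k)) * hchoose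

theorem genXt_eq_genX_inv (Φ : ℝ → ℂ) : genXt Φ = genX Φ⁻¹ := by
  funext n
  induction n with
  | zero => rfl
  | succ n ih => funext x₀ x; simp [genX, genXt, ih, inv_zpow']

theorem genX_self (Φ : ℝ → ℂ) {n : ℕ} (hn : n ≠ 0) (x₀ : ℝ) : genX Φ n x₀ x₀ = 0 := by
  obtain ⟨n, rfl⟩ := Nat.exists_eq_succ_of_ne_zero hn
  simp [genX]

theorem eqOn_genX {Φ Ψ : ℝ → ℂ} {s : Set ℝ} (hs : s.OrdConnected) (h : EqOn Φ Ψ s)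
    {x₀ : ℝ} (hx₀ : x₀ ∈ s) (n : ℕ) : EqOn (genX Φ n x₀) (genX Ψ n x₀) s := by
  induction n with
  | zero => exact fun _ _ => rfl
  | succ n ih =>
    intro x hx
    simp only [genX]
    congr 1
    refine integral_congr fun ξ hξ => ?_
    have hξs := hs.uIcc_subset hx₀ hx hξ
    simp only [ih hξs, h hξs]

theorem neg_one_pow_succ_eq_neg_neg_one_pow_sub {n k : ℕ} (hn : Even n) (hk : k ≤ n) :
    (-1 : ℤ) ^ (k + 1) = -(-1) ^ (n - k) := by
  rw [pow_succ, mul_neg_one, neg_inj, neg_one_pow_congr]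
  simp [Nat.even_sub hk, hn]

section Calculus

variable {Φ : ℝ → ℂ}

theorem continuous_genX (hΦ : Continuous Φ) (hΦ0 : ∀ y, Φ y ≠ 0) (n : ℕ) (x₀ : ℝ) :
    Continuous (genX Φ n x₀) := by
  induction n with
  | zero => exact continuous_const
  | succ n ih =>
    have hint := ih.mul (hΦ.zpow₀ ((-1 : ℤ) ^ (n + 1)) fun y => Or.inl (hΦ0 y))
    exact continuous_const.mul (continuous_primitive (fun _ _ => hint.intervalIntegrable _ _) x₀)

theorem hasDerivAt_genX (hΦ : Continuous Φ) (hΦ0 : ∀ y, Φ y ≠ 0) (n : ℕ) (x₀ x : ℝ) :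
    HasDerivAt (genX Φ n x₀) ((n : ℂ) * genX Φ (n - 1) x₀ x * Φ x ^ ((-1 : ℤ) ^ n)) x := by
  cases n with
  | zero =>
    rw [Nat.cast_zero, zero_mul, zero_mul]
    exact hasDerivAt_const x (1 : ℂ)
  | succ n =>
    have hint := (continuous_genX hΦ hΦ0 n x₀).mul
      (hΦ.zpow₀ ((-1 : ℤ) ^ (n + 1)) fun y => Or.inl (hΦ0 y))
    simpa [genX, mul_assoc] using
      (hint.integral_hasStrictDerivAt x₀ x).hasDerivAt.const_mul ((n + 1 : ℕ) : ℂ)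

theorem sum_alternating_choose_genX_mul_genXt_eq_zero (hΦ : Continuous Φ)
    (hΦ0 : ∀ y, Φ y ≠ 0) {n : ℕ} (hn : Even n) (hn0 : n ≠ 0) (x₀ x : ℝ) :
    ∑ k ∈ range (n + 1), (-1 : ℂ) ^ k * (n.choose k : ℂ) * genX Φ k x₀ x * genXt Φ (n - k) x₀ x
      = 0 := by
  set S : ℝ → ℂ := fun y => ∑ k ∈ range (n + 1),
    (-1 : ℂ) ^ k * (n.choose k : ℂ) * (genX Φ k x₀ y * genX Φ⁻¹ (n - k) x₀ y)
  have hS : ∀ y, HasDerivAt S 0 y := fun y => by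
    have hweights : ∀ k < n, Φ y ^ ((-1 : ℤ) ^ (k + 1)) = Φ⁻¹ y ^ ((-1 : ℤ) ^ (n - k)) :=
      fun k hk => by
        rw [Pi.inv_apply, inv_zpow', neg_one_pow_succ_eq_neg_neg_one_pow_sub hn hk.le]
    rw [← sum_alternating_choose_mul_leibniz_eq_zero n (genX Φ · x₀ y) (genX Φ⁻¹ · x₀ y)
      (fun k => Φ y ^ ((-1 : ℤ) ^ k)) (fun k => Φ⁻¹ y ^ ((-1 : ℤ) ^ k)) hweights]
    exact HasDerivAt.fun_sum fun k _ => ((hasDerivAt_genX hΦ hΦ0 k x₀ y).mul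
      (hasDerivAt_genX (hΦ.inv₀ hΦ0) (fun y => inv_ne_zero (hΦ0 y)) (n - k) x₀ y)).const_mul _
  have hSx₀ : S x₀ = 0 := sum_eq_zero fun k _ => by
    rcases k with _ | k
    · simp [genX_self _ hn0]
    · simp [genX_self _ k.succ_ne_zero]
  have hSx : S x = S x₀ :=
    is_const_of_deriv_eq_zero (fun y => (hS y).differentiableAt) (fun y => (hS y).deriv) x x₀
  simpa [S, genXt_eq_genX_inv, mul_assoc] using hSx.trans hSx₀

end Calculus

theorem stmt_4 (a b : ℝ) (Φ : ℝ → ℂ) (hΦc : ContinuousOn Φ (Set.Icc a b))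
    (hΦ0 : ∀ y ∈ Set.Icc a b, Φ y ≠ 0) (x₀ x : ℝ)
    (hx₀ : x₀ ∈ Set.Icc a b) (hx : x ∈ Set.Icc a b) (n : ℕ) (hn : Even n)
    (hn2 : 2 ≤ n) :
    ∑ k ∈ Finset.range (n + 1),
      (-1 : ℂ) ^ k * (n.choose k : ℂ) * genX Φ k x₀ x * genXt Φ (n - k) x₀ x = 0 := by
  have hab : a ≤ b := hx₀.1.trans hx₀.2
  set Ψ : ℝ → ℂ := IccExtend hab fun t : Icc a b => Φ t
  have hΦΨ : EqOn Φ Ψ (Icc a b) := fun y hy =>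
    (IccExtend_of_mem hab (fun t : Icc a b => Φ t) hy).symm
  have hΨ : Continuous Ψ := hΦc.domRestrict.Icc_extend'
  have hΨ0 : ∀ y, Ψ y ≠ 0 := fun y => hΦ0 _ (projIcc a b hab y).2
  have hgenX : ∀ k, genX Φ k x₀ x = genX Ψ k x₀ x := fun k =>
    eqOn_genX ordConnected_Icc hΦΨ hx₀ k hx
  have hgenXt : ∀ k, genXt Φ k x₀ x = genXt Ψ k x₀ x := fun k => by
    simpa only [genXt_eq_genX_inv] using eqOn_genX (Φ := Φ⁻¹) (Ψ := Ψ⁻¹) ordConnected_Icc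
      (fun y hy => by simp only [Pi.inv_apply, hΦΨ hy]) hx₀ k hx
  simp only [hgenX, hgenXt]
  exact sum_alternating_choose_genX_mul_genXt_eq_zero hΨ hΨ0 hn (by omega) x₀ x
end

section
/- For all n ≥ 1, the n-fold Volterra composition power of Φ·X^(1) satisfies (Φ X^(1))^{⟨n⟩}(x₀,x) = Φ(x) X^(2n−1)(x₀,x)/(2n−1)!, and composing with the constant function 1 gives ((Φ X^(1))^{⟨n⟩} ⋆ 1)(x₀,x) = X^(2n)(x₀,x)/(2n)!. -/
/-- Volterra composition of the first type. -/
noncomputable def volt (f g : ℝ → ℝ → ℂ) (x y : ℝ) : ℂ :=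
  ∫ ξ in x..y, f x ξ * g ξ y

/-- `voltPow f k = f^{⟨k+1⟩}`: the `(k+1)`-fold Volterra composition power of `f`. -/
noncomputable def voltPow (f : ℝ → ℝ → ℂ) : ℕ → ℝ → ℝ → ℂ
  | 0 => f
  | k + 1 => volt (voltPow f k) f

/-!
Since `X⁽¹⁾(ξ, x) = ∫_ξ^x 1/Φ`, swapping the order of integration (Dirichlet's formula) turns
one Volterra step `∫_{x₀}^x X⁽²ᵏ⁺¹⁾(x₀, ξ) Φ(ξ) X⁽¹⁾(ξ, x) dξ` into
`∫_{x₀}^x (∫_{x₀}^ξ X⁽²ᵏ⁺¹⁾ Φ) / Φ(ξ) dξ`, i.e. two consecutive steps of the recursion defining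
the generalized powers; this gives the first formula by induction and the second one after one
more integration. Continuity is only assumed on `[a, b]`, so `Φ` is first extended continuously
to `ℝ` by clamping, which changes neither side of the identities on `[a, b]`.
-/

open intervalIntegral Set

theorem intervalIntegral.integral_mul_integral_eq_integral_integral_mul {A : Type*} [NormedRing A]
    [NormedAlgebra ℝ A] [CompleteSpace A] {f g : ℝ → A} (hf : Continuous f) (hg : Continuous g)
    (a b : ℝ) :
    ∫ ξ in a..b, f ξ * ∫ t in ξ..b, g t = ∫ ξ in a..b, (∫ t in a..ξ, f t) * g ξ := by
  have hF : ∀ ξ, HasDerivAt (fun u => ∫ t in a..u, f t) (f ξ) ξ := fun ξ =>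
    (hf.integral_hasStrictDerivAt a ξ).hasDerivAt
  have hG : ∀ ξ, HasDerivAt (fun u => ∫ t in u..b, g t) (-g ξ) ξ := fun ξ =>
    integral_hasDerivAt_left (hg.intervalIntegrable _ _) (hg.stronglyMeasurableAtFilter _ _)
      hg.continuousAt
  have hparts := integral_mul_deriv_eq_deriv_mul (fun ξ _ => hF ξ) (fun ξ _ => hG ξ)
    (hf.intervalIntegrable a b) (hg.neg.intervalIntegrable a b)
  simp only [integral_same, mul_zero, zero_mul, sub_zero, zero_sub, mul_neg,
    intervalIntegral.integral_neg, neg_inj] at hparts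
  exact hparts.symm

section GeneralizedPowers

theorem genX_succ (Φ : ℝ → ℂ) (m : ℕ) (x₀ x : ℝ) :
    genX Φ (m + 1) x₀ x = (m + 1 : ℕ) * ∫ ξ in x₀..x, genX Φ m x₀ ξ * Φ ξ ^ ((-1 : ℤ) ^ (m + 1)) :=
  rfl

theorem genX_two_mul_add_one (Φ : ℝ → ℂ) (k : ℕ) (x₀ x : ℝ) :
    ∫ ξ in x₀..x, genX Φ (2 * k) x₀ ξ * (Φ ξ)⁻¹ = genX Φ (2 * k + 1) x₀ x / (2 * k + 1 : ℕ) := by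
  have hsign : (-1 : ℤ) ^ (2 * k + 1) = -1 := Odd.neg_one_pow ⟨k, rfl⟩
  simp only [genX_succ, hsign, zpow_neg_one]
  rw [eq_div_iff (Nat.cast_ne_zero.2 (Nat.succ_ne_zero _)), mul_comm]

theorem genX_two_mul_add_two (Φ : ℝ → ℂ) (k : ℕ) (x₀ x : ℝ) :
    ∫ ξ in x₀..x, genX Φ (2 * k + 1) x₀ ξ * Φ ξ = genX Φ (2 * k + 2) x₀ x / (2 * k + 2 : ℕ) := by
  have hsign : (-1 : ℤ) ^ (2 * k + 1 + 1) = 1 := Even.neg_one_pow ⟨k + 1, by ring⟩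
  simp only [genX_succ, hsign, zpow_one]
  rw [eq_div_iff (Nat.cast_ne_zero.2 (Nat.succ_ne_zero _)), mul_comm]

theorem genX_one_eq_integral_inv (Φ : ℝ → ℂ) (x₀ x : ℝ) :
    genX Φ 1 x₀ x = ∫ ξ in x₀..x, (Φ ξ)⁻¹ := by
  simp [genX]

variable {Φ : ℝ → ℂ}

theorem continuous_genX_s19 (hc : Continuous Φ) (h0 : ∀ y, Φ y ≠ 0) (m : ℕ) (x₀ : ℝ) :
    Continuous (genX Φ m x₀) := by
  induction m with
  | zero => exact continuous_const
  | succ m ih =>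
    have hint : Continuous fun ξ => genX Φ m x₀ ξ * Φ ξ ^ ((-1 : ℤ) ^ (m + 1)) :=
      ih.mul (hc.zpow₀ _ fun y => .inl (h0 y))
    exact continuous_const.mul (continuous_primitive (fun _ _ => hint.intervalIntegrable _ _) x₀)

theorem genX_congr {Ψ : ℝ → ℂ} {s : Set ℝ} (hs : s.OrdConnected) (h : EqOn Φ Ψ s) (m : ℕ) :
    ∀ x₀ ∈ s, ∀ x ∈ s, genX Φ m x₀ x = genX Ψ m x₀ x := by
  induction m with
  | zero => exact fun _ _ _ _ => rfl
  | succ m ih =>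
    intro x₀ hx₀ x hx
    simp only [genX]
    congr 1
    refine integral_congr fun ξ hξ => ?_
    have hξ : ξ ∈ s := hs.uIcc_subset hx₀ hx hξ
    simp only [ih x₀ hx₀ ξ hξ, h hξ]

end GeneralizedPowers

section VolterraComposition

theorem volt_congr {f f' g g' : ℝ → ℝ → ℂ} {s : Set ℝ} (hs : s.OrdConnected)
    (hf : ∀ u ∈ s, ∀ v ∈ s, f u v = f' u v) (hg : ∀ u ∈ s, ∀ v ∈ s, g u v = g' u v) :
    ∀ x ∈ s, ∀ y ∈ s, volt f g x y = volt f' g' x y := by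
  intro x hx y hy
  refine integral_congr fun ξ hξ => ?_
  have hξ : ξ ∈ s := hs.uIcc_subset hx hy hξ
  simp only [hf x hx ξ hξ, hg ξ hξ y hy]

theorem voltPow_congr {f g : ℝ → ℝ → ℂ} {s : Set ℝ} (hs : s.OrdConnected)
    (h : ∀ u ∈ s, ∀ v ∈ s, f u v = g u v) (k : ℕ) :
    ∀ x ∈ s, ∀ y ∈ s, voltPow f k x y = voltPow g k x y := by
  induction k with
  | zero => exact h
  | succ k ih => exact volt_congr hs ih h

variable {Φ : ℝ → ℂ} (hc : Continuous Φ) (h0 : ∀ y, Φ y ≠ 0)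
include hc h0

theorem voltPow_mul_genX_one (k : ℕ) (x₀ x : ℝ) :
    voltPow (fun u v => Φ v * genX Φ 1 u v) k x₀ x =
      Φ x * genX Φ (2 * k + 1) x₀ x / ((2 * k + 1).factorial : ℂ) := by
  induction k generalizing x with
  | zero => simp [voltPow]
  | succ k ih =>
    have hswap := integral_mul_integral_eq_integral_integral_mul
      (f := fun ξ => genX Φ (2 * k + 1) x₀ ξ * Φ ξ) (g := fun ξ => (Φ ξ)⁻¹)
      ((continuous_genX_s19 hc h0 _ x₀).mul hc) (hc.inv₀ h0) x₀ x
    simp only [genX_two_mul_add_two, ← genX_one_eq_integral_inv, div_mul_eq_mul_div,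
      intervalIntegral.integral_div] at hswap
    have hnext := genX_two_mul_add_one Φ (k + 1) x₀ x
    rw [show 2 * (k + 1) = 2 * k + 2 by ring] at hnext
    simp only [voltPow, volt, ih]
    calc ∫ ξ in x₀..x, Φ ξ * genX Φ (2 * k + 1) x₀ ξ / ((2 * k + 1).factorial : ℂ) *
            (Φ x * genX Φ 1 ξ x)
        = Φ x / ((2 * k + 1).factorial : ℂ) *
            ∫ ξ in x₀..x, genX Φ (2 * k + 1) x₀ ξ * Φ ξ * genX Φ 1 ξ x := by
          rw [← integral_const_mul]
          exact integral_congr fun ξ _ => by ring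
      _ = Φ x * genX Φ (2 * (k + 1) + 1) x₀ x / ((2 * (k + 1) + 1).factorial : ℂ) := by
          rw [hswap, show 2 * (k + 1) = 2 * k + 2 by ring, hnext, Nat.factorial_succ (2 * k + 2),
            Nat.factorial_succ (2 * k + 1), Nat.cast_mul, Nat.cast_mul]
          ring

theorem volt_voltPow_mul_genX_one_const_one (k : ℕ) (x₀ x : ℝ) :
    volt (voltPow (fun u v => Φ v * genX Φ 1 u v) k) (fun _ _ => 1) x₀ x =
      genX Φ (2 * k + 2) x₀ x / ((2 * k + 2).factorial : ℂ) := by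
  calc volt (voltPow (fun u v => Φ v * genX Φ 1 u v) k) (fun _ _ => 1) x₀ x
      = (∫ ξ in x₀..x, genX Φ (2 * k + 1) x₀ ξ * Φ ξ) / ((2 * k + 1).factorial : ℂ) := by
        rw [volt, ← intervalIntegral.integral_div]
        exact integral_congr fun ξ _ => by rw [voltPow_mul_genX_one hc h0]; ring
    _ = genX Φ (2 * k + 2) x₀ x / ((2 * k + 2).factorial : ℂ) := by
        rw [genX_two_mul_add_two, Nat.factorial_succ (2 * k + 1), Nat.cast_mul, div_div]

end VolterraComposition

theorem stmt_19 (a b : ℝ) (Φ : ℝ → ℂ) (hΦc : ContinuousOn Φ (Set.Icc a b))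
    (hΦ0 : ∀ y ∈ Set.Icc a b, Φ y ≠ 0) (n : ℕ) (hn : 1 ≤ n)
    (x₀ x : ℝ) (hx₀ : x₀ ∈ Set.Icc a b) (hx : x ∈ Set.Icc a b) :
    voltPow (fun u v => Φ v * genX Φ 1 u v) (n - 1) x₀ x =
      Φ x * genX Φ (2 * n - 1) x₀ x / ((2 * n - 1).factorial : ℂ) ∧
    volt (voltPow (fun u v => Φ v * genX Φ 1 u v) (n - 1)) (fun _ _ => 1) x₀ x =
      genX Φ (2 * n) x₀ x / ((2 * n).factorial : ℂ) := by
  have hab : a ≤ b := hx₀.1.trans hx₀.2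
  set Ψ : ℝ → ℂ := fun y => Φ (projIcc a b hab y) with hΨ
  have hΨc : Continuous Ψ := hΦc.comp_continuous (continuous_subtype_val.comp continuous_projIcc)
    fun y => (projIcc a b hab y).2
  have hΨ0 : ∀ y, Ψ y ≠ 0 := fun y => hΦ0 _ (projIcc a b hab y).2
  have hΨΦ : EqOn Ψ Φ (Icc a b) := fun y hy => by simp only [hΨ, projIcc_of_mem hab hy]
  have hs : (Icc a b).OrdConnected := ordConnected_Icc
  have hkernel : ∀ u ∈ Icc a b, ∀ v ∈ Icc a b,
      Ψ v * genX Ψ 1 u v = Φ v * genX Φ 1 u v := fun u hu v hv => by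
    rw [hΨΦ hv, genX_congr hs hΨΦ 1 u hu v hv]
  obtain ⟨k, rfl⟩ : ∃ k, n = k + 1 := ⟨n - 1, by omega⟩
  rw [show k + 1 - 1 = k by omega, show 2 * (k + 1) - 1 = 2 * k + 1 by omega,
    show 2 * (k + 1) = 2 * k + 2 by ring]
  constructor
  · rw [← voltPow_congr hs hkernel k x₀ hx₀ x hx, voltPow_mul_genX_one hΨc hΨ0, hΨΦ hx,
      genX_congr hs hΨΦ _ x₀ hx₀ x hx]
  · rw [← volt_congr hs (voltPow_congr hs hkernel k) (fun _ _ _ _ => rfl) x₀ hx₀ x hx,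
      volt_voltPow_mul_genX_one_const_one hΨc hΨ0, genX_congr hs hΨΦ _ x₀ hx₀ x hx]
end
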